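/- Let p : ℕ → (0,1) be any function such that N^{−1} = o(p(N)) and p(N) = o(N^{−1/2}). For each N let A be a random subset of I_N in the binomial model with parameter p(N), and let S := |A + A| and D := |A − A|. Then S ∼ (N·p(N))²/2 and D ∼ (N·p(N))²; in particular D ∼ 2S. -/

import Mathlib

open Finset Filter Asymptotics Pointwise

open Classical in
/-- Probability, under the binomial model on subsets of `I_N = {0, …, N}` with
parameter `p`, of the event `E`. -/
noncomputable def binomialProb (N : ℕ) (p : ℝ) (E : Finset ℕ → Prop) : ℝ :=
  ∑ A ∈ (Finset.range (N + 1)).powerset,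
    if E A then p ^ A.card * (1 - p) ^ (N + 1 - A.card) else 0

/-- `Y ∼ f(N)` in the sense of Hegarty–Miller: for all `ε₁, ε₂ > 0` the probability
that `Y` lies outside `[(1−ε₁)f(N), (1+ε₁)f(N)]` is eventually less than `ε₂`. -/
def BinomialTilde (p : ℕ → ℝ) (Y : ℕ → Finset ℕ → ℝ) (f : ℕ → ℝ) : Prop :=
  ∀ ε₁ ε₂ : ℝ, 0 < ε₁ → 0 < ε₂ → ∃ N₀ : ℕ, ∀ N : ℕ, N₀ < N →
    binomialProb N (p N)
      (fun A => ¬ ((1 - ε₁) * f N ≤ Y N A ∧ Y N A ≤ (1 + ε₁) * f N)) < ε₂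

/-!
By Chebyshev's inequality `|A|` is concentrated at `N p → ∞`. The sums `a + b` (`a ≤ b`) and the
nonzero differences `a - b` (`a ≠ b`) of elements of `A` would all be distinct were it not for
nontrivial solutions of `a + b = c + d` in `A`; hence `|A + A|` and `|A - A|` lie within `T(A) + 1`
of `|A| (|A| + 1) / 2` and `|A| (|A| - 1)`, where `T(A)` is the number of such solutions.
A nontrivial solution involves at least three distinct elements, and four unless `a = b` or
`c = d`, so `E T ≤ 2 (N + 1)² p³ + (N + 1)³ p⁴ = o((N p)²)` because `p = o(N^{-1/2})`, and Markov's
inequality makes `T(A) = o((N p)²)` asymptotically almost surely.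
-/

open Topology

theorem Finset.card_le_card_image_add_card_collisions {α β : Type*} [DecidableEq α]
    [DecidableEq β] (s : Finset α) (f : α → β) :
    #s ≤ #(s.image f) + #((s ×ˢ s).filter fun q => q.1 ≠ q.2 ∧ f q.1 = f q.2) := by
  rcases s.eq_empty_or_nonempty with rfl | ⟨x₀, -⟩
  · simp
  have : Nonempty α := ⟨x₀⟩
  -- every element outside the image of a section `g` of `f` collides with its representative
  set g := Function.invFunOn f s
  set t := (s.image f).image g
  have hgf : ∀ x ∈ s, g (f x) ∈ s ∧ f (g (f x)) = f x := fun x hx =>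
    ⟨Function.invFunOn_mem ⟨x, hx, rfl⟩, Function.invFunOn_eq ⟨x, hx, rfl⟩⟩
  have hsdiff : #(s \ t) ≤ #((s ×ˢ s).filter fun q => q.1 ≠ q.2 ∧ f q.1 = f q.2) := by
    refine card_le_card_of_injOn (fun x => (x, g (f x))) (fun x hx => ?_)
      (fun x _ y _ h => congrArg Prod.fst h)
    obtain ⟨hxs, hxt⟩ := mem_sdiff.mp hx
    have hgt : g (f x) ∈ t := mem_image_of_mem g (mem_image_of_mem f hxs)
    simp only [coe_filter, mem_product]
    exact ⟨⟨hxs, (hgf x hxs).1⟩, fun h : x = g (f x) => hxt (h ▸ hgt), (hgf x hxs).2.symm⟩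
  calc #s ≤ #(s \ t) + #t := card_le_card_sdiff_add_card
    _ ≤ _ := by rw [add_comm]; exact add_le_add card_image_le hsdiff

section AddQuadruples

variable {M : Type*} [DecidableEq M]

def nontrivialAddQuadruples [Add M] (A : Finset M) : Finset ((M × M) × M × M) :=
  ((A ×ˢ A) ×ˢ (A ×ˢ A)).filter
    fun q => q.1.1 + q.1.2 = q.2.1 + q.2.2 ∧ q.1 ≠ q.2 ∧ q.1 ≠ q.2.swap

theorem mem_nontrivialAddQuadruples [Add M] {A : Finset M} {a b c d : M} :
    ((a, b), (c, d)) ∈ nontrivialAddQuadruples A ↔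
      (a ∈ A ∧ b ∈ A ∧ c ∈ A ∧ d ∈ A) ∧ a + b = c + d ∧ (a, b) ≠ (c, d) ∧ (a, b) ≠ (d, c) := by
  simp [nontrivialAddQuadruples, and_assoc]

theorem nontrivialAddQuadruples_eq_filter [Add M] {A s : Finset M} (hA : A ⊆ s) :
    nontrivialAddQuadruples A = (nontrivialAddQuadruples s).filter
      fun q => {q.1.1, q.1.2, q.2.1, q.2.2} ⊆ A := by
  ext ⟨⟨a, b⟩, c, d⟩
  simp only [mem_filter, mem_nontrivialAddQuadruples, insert_subset_iff, singleton_subset_iff]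
  constructor
  · rintro ⟨h, hrest⟩
    exact ⟨⟨⟨hA h.1, hA h.2.1, hA h.2.2.1, hA h.2.2.2⟩, hrest⟩, h⟩
  · rintro ⟨⟨-, hrest⟩, h⟩
    exact ⟨h, hrest⟩

theorem image_sym2_add [AddCommMonoid M] (A : Finset M) :
    A.sym2.image (Sym2.lift ⟨(· + ·), add_comm⟩) = A + A := by
  ext x
  simp [Finset.mem_add, Sym2.exists, and_assoc]

theorem card_add_le_card_sym2 [AddCommMonoid M] (A : Finset M) : #(A + A) ≤ #A.sym2 :=
  image_sym2_add A ▸ card_image_le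

theorem card_sym2_le_card_add_add [AddCommMonoid M] (A : Finset M) :
    #A.sym2 ≤ #(A + A) + #(nontrivialAddQuadruples A) := by
  have hcoll := card_le_card_image_add_card_collisions A.sym2 (Sym2.lift ⟨(· + ·), add_comm⟩)
  rw [image_sym2_add] at hcoll
  refine hcoll.trans (Nat.add_le_add_left (card_le_card_of_surjOn
    (fun q : (M × M) × M × M => (s(q.1.1, q.1.2), s(q.2.1, q.2.2))) ?_) _)
  rintro ⟨z, w⟩ hzw
  induction z using Sym2.ind with | h a b => ?_
  induction w using Sym2.ind with | h c d => ?_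
  simp only [coe_filter, mem_product, mk_mem_sym2_iff, Sym2.lift_mk, ne_eq, Sym2.eq_iff,
    Set.mem_ofPred_eq] at hzw
  refine ⟨((a, b), (c, d)), mem_nontrivialAddQuadruples.mpr ?_, rfl⟩
  simp only [ne_eq, Prod.mk.injEq]
  tauto

theorem card_sub_image_le_card_offDiag_add_one {G : Type*} [AddCommGroup G] [DecidableEq G]
    (f : M → G) (A : Finset M) :
    #(A.image f - A.image f) ≤ #A.offDiag + 1 := by
  have hsub : A.image f - A.image f ⊆ insert 0 (A.offDiag.image fun q => f q.1 - f q.2) := by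
    intro x hx
    simp only [Finset.mem_sub, mem_image] at hx
    obtain ⟨_, ⟨a, ha, rfl⟩, _, ⟨b, hb, rfl⟩, rfl⟩ := hx
    by_cases hab : a = b
    · simp [hab]
    · exact mem_insert_of_mem (mem_image.mpr ⟨(a, b), mem_offDiag.mpr ⟨ha, hb, hab⟩, rfl⟩)
  calc #(A.image f - A.image f) ≤ #(insert 0 (A.offDiag.image fun q => f q.1 - f q.2)) :=
        card_le_card hsub
    _ ≤ #A.offDiag + 1 := (card_insert_le _ _).trans (Nat.add_le_add_right card_image_le _)

theorem card_offDiag_le_card_sub_image_add {G : Type*} [AddCommMonoid M] [AddCommGroup G]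
    [DecidableEq G] (f : M →+ G) (hf : Function.Injective f) (A : Finset M) :
    #A.offDiag ≤ #(A.image f - A.image f) + #(nontrivialAddQuadruples A) := by
  have hcoll := card_le_card_image_add_card_collisions A.offDiag fun q => f q.1 - f q.2
  have himage : (A.offDiag.image fun q => f q.1 - f q.2) ⊆ A.image f - A.image f := by
    simp only [image_subset_iff, mem_offDiag]
    exact fun q hq => sub_mem_sub (mem_image_of_mem f hq.1) (mem_image_of_mem f hq.2.1)
  refine hcoll.trans (add_le_add (card_le_card himage) (card_le_card_of_injOn
    (fun q => ((q.1.1, q.2.2), (q.2.1, q.1.2))) ?_ ?_))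
  · rintro ⟨⟨a, b⟩, c, d⟩ hq
    simp only [coe_filter, mem_product, mem_offDiag, Set.mem_ofPred_eq] at hq
    obtain ⟨⟨⟨ha, hb, hab⟩, hc, hd, -⟩, hne, heq⟩ := hq
    refine mem_nontrivialAddQuadruples.mpr ⟨⟨ha, hd, hc, hb⟩, hf ?_, ?_, ?_⟩
    · rw [map_add, map_add, ← sub_eq_sub_iff_add_eq_add]
      exact heq
    · simp only [ne_eq, Prod.mk.injEq] at hne ⊢
      tauto
    · simp only [ne_eq, Prod.mk.injEq]
      tauto
  · rintro ⟨⟨a, b⟩, c, d⟩ - ⟨⟨a', b'⟩, c', d'⟩ - h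
    simp only [Prod.mk.injEq] at h ⊢
    tauto

end AddQuadruples

section Counting

variable {M : Type*} [DecidableEq M] [AddCancelCommMonoid M] {A : Finset M} {a b c d : M}

theorem ne_of_mem_nontrivialAddQuadruples (h : ((a, b), (c, d)) ∈ nontrivialAddQuadruples A) :
    a ≠ c ∧ a ≠ d ∧ b ≠ c ∧ b ≠ d := by
  obtain ⟨-, hsum, hcd, hdc⟩ := mem_nontrivialAddQuadruples.mp h
  refine ⟨?_, ?_, ?_, ?_⟩ <;> rintro rfl
  · exact hcd (by rw [add_left_cancel hsum])
  · exact hdc (by rw [add_left_cancel (hsum.trans (add_comm c a))])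
  · exact hdc (by rw [add_right_cancel (hsum.trans (add_comm b d))])
  · exact hcd (by rw [add_right_cancel hsum])

theorem three_le_card_of_mem_nontrivialAddQuadruples [IsAddTorsionFree M]
    (h : ((a, b), (c, d)) ∈ nontrivialAddQuadruples A) : 3 ≤ #{a, b, c, d} := by
  obtain ⟨hac, had, hbc, -⟩ := ne_of_mem_nontrivialAddQuadruples h
  rw [Nat.succ_le_iff, two_lt_card_iff]
  by_cases hcd : c = d
  · subst hcd
    have hab : a ≠ b := by
      rintro rfl
      obtain ⟨-, hsum, -⟩ := mem_nontrivialAddQuadruples.mp h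
      exact hac ((nsmul_right_inj two_ne_zero).mp (by rw [two_nsmul, two_nsmul, hsum]))
    exact ⟨a, b, c, by simp, by simp, by simp, hab, hac, hbc⟩
  · exact ⟨a, c, d, by simp, by simp, by simp, hac, had, hcd⟩

theorem four_le_card_of_mem_nontrivialAddQuadruples
    (h : ((a, b), (c, d)) ∈ nontrivialAddQuadruples A) (hab : a ≠ b) (hcd : c ≠ d) :
    4 ≤ #{a, b, c, d} := by
  obtain ⟨hac, had, hbc, hbd⟩ := ne_of_mem_nontrivialAddQuadruples h
  simp [card_insert_of_notMem, *]

theorem card_nontrivialAddQuadruples_le (s : Finset M) :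
    #(nontrivialAddQuadruples s) ≤ #s ^ 3 := by
  calc #(nontrivialAddQuadruples s) ≤ #(s ×ˢ s ×ˢ s) := by
        refine card_le_card_of_injOn (fun q => (q.1.1, q.1.2, q.2.1)) ?_ ?_
        · rintro ⟨⟨a, b⟩, c, d⟩ hq
          obtain ⟨⟨ha, hb, hc, -⟩, -⟩ := mem_nontrivialAddQuadruples.mp hq
          simp [ha, hb, hc]
        · rintro ⟨⟨a, b⟩, c, d⟩ hq ⟨⟨a', b'⟩, c', d'⟩ hq' h
          simp only [Prod.mk.injEq] at h
          obtain ⟨rfl, rfl, rfl⟩ := h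
          rw [add_left_cancel ((mem_nontrivialAddQuadruples.mp hq).2.1.symm.trans
            (mem_nontrivialAddQuadruples.mp hq').2.1)]
    _ = #s ^ 3 := by simp only [card_product]; ring

theorem card_filter_nontrivialAddQuadruples_le (s : Finset M) :
    #((nontrivialAddQuadruples s).filter fun q => q.1.1 = q.1.2 ∨ q.2.1 = q.2.2) ≤ 2 * #s ^ 2 := by
  have card_filter_le_sq (P : (M × M) × M × M → Prop) [DecidablePred P]
      (hP : ∀ q ∈ nontrivialAddQuadruples s, ∀ q' ∈ nontrivialAddQuadruples s, P q → P q' →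
        q.1.1 = q'.1.1 → q.2.1 = q'.2.1 → q = q') :
      #((nontrivialAddQuadruples s).filter P) ≤ #s ^ 2 := by
    calc #((nontrivialAddQuadruples s).filter P) ≤ #(s ×ˢ s) := by
          refine card_le_card_of_injOn (fun q => (q.1.1, q.2.1)) ?_ ?_
          · rintro ⟨⟨a, b⟩, c, d⟩ hq
            obtain ⟨⟨ha, -, hc, -⟩, -⟩ := mem_nontrivialAddQuadruples.mp (mem_filter.mp hq).1
            simp [ha, hc]
          · intro q hq q' hq' h
            simp only [coe_filter, Set.mem_ofPred_eq, Prod.mk.injEq] at hq hq' h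
            exact hP q hq.1 q' hq'.1 hq.2 hq'.2 h.1 h.2
      _ = #s ^ 2 := by rw [card_product, sq]
  rw [filter_or, two_mul]
  refine (card_union_le _ _).trans (add_le_add (card_filter_le_sq _ ?_) (card_filter_le_sq _ ?_))
  all_goals
    rintro ⟨⟨a, b⟩, c, d⟩ hq ⟨⟨a', b'⟩, c', d'⟩ hq' hP hP' rfl rfl
    have h := (mem_nontrivialAddQuadruples.mp hq).2.1
    have h' := (mem_nontrivialAddQuadruples.mp hq').2.1
    simp only at hP hP'
    subst hP hP'
  · rw [add_left_cancel (h.symm.trans h')]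
  · rw [add_left_cancel (h.trans h'.symm)]

end Counting

section BinomialExpectation

variable {α : Type*} {s : Finset α} {p : ℝ}

noncomputable def binomialExp (s : Finset α) (p : ℝ) (X : Finset α → ℝ) : ℝ :=
  ∑ A ∈ s.powerset, p ^ #A * (1 - p) ^ (#s - #A) * X A

theorem binomialExp_congr {X Y : Finset α → ℝ} (h : ∀ A ⊆ s, X A = Y A) :
    binomialExp s p X = binomialExp s p Y :=
  sum_congr rfl fun A hA => by rw [h A (mem_powerset.mp hA)]

theorem binomialExp_add (X Y : Finset α → ℝ) :
    binomialExp s p (fun A => X A + Y A) = binomialExp s p X + binomialExp s p Y := by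
  simp only [binomialExp, mul_add, sum_add_distrib]

theorem binomialExp_const_mul (c : ℝ) (X : Finset α → ℝ) :
    binomialExp s p (fun A => c * X A) = c * binomialExp s p X := by
  simp only [binomialExp, mul_sum]
  exact sum_congr rfl fun A _ => by ring

theorem binomialExp_const (c : ℝ) : binomialExp s p (fun _ => c) = c := by
  simp only [binomialExp, ← sum_mul, sum_pow_mul_eq_add_pow, add_sub_cancel, one_pow, one_mul]

theorem binomialExp_sum {ι : Type*} (Q : Finset ι) (X : ι → Finset α → ℝ) :
    binomialExp s p (fun A => ∑ q ∈ Q, X q A) = ∑ q ∈ Q, binomialExp s p (X q) := by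
  simp only [binomialExp, mul_sum]
  exact sum_comm

theorem binomialExp_mono (hp : p ∈ Set.Icc 0 1) {X Y : Finset α → ℝ} (h : ∀ A ⊆ s, X A ≤ Y A) :
    binomialExp s p X ≤ binomialExp s p Y :=
  sum_le_sum fun A hA => mul_le_mul_of_nonneg_left (h A (mem_powerset.mp hA))
    (mul_nonneg (pow_nonneg hp.1 _) (pow_nonneg (sub_nonneg.mpr hp.2) _))

theorem binomialExp_indicator_subset [DecidableEq α] {B : Finset α} (hB : B ⊆ s) :
    binomialExp s p (fun A => if B ⊆ A then 1 else 0) = p ^ #B := by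
  -- expand `∏ i ∈ s, (p + [i ∉ B] (1 - p))` over the subsets of `s`
  have hterm : ∀ A ∈ s.powerset, p ^ #A * (1 - p) ^ (#s - #A) * (if B ⊆ A then 1 else 0)
      = (∏ _ ∈ A, p) * ∏ i ∈ s \ A, (if i ∈ B then (0 : ℝ) else 1 - p) := by
    intro A hA
    by_cases hBA : B ⊆ A
    · have : ∀ i ∈ s \ A, (if i ∈ B then (0 : ℝ) else 1 - p) = 1 - p := fun i hi =>
        if_neg fun hiB => (mem_sdiff.mp hi).2 (hBA hiB)
      rw [prod_congr rfl this, prod_const, prod_const, if_pos hBA, mul_one,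
        card_sdiff_of_subset (mem_powerset.mp hA)]
    · obtain ⟨i, hiB, hiA⟩ := not_subset.mp hBA
      rw [if_neg hBA, mul_zero,
        prod_eq_zero (mem_sdiff.mpr ⟨hB hiB, hiA⟩) (by simp [hiB]), mul_zero]
  rw [binomialExp, sum_congr rfl hterm, ← prod_add]
  have hfactor : ∀ i ∈ s, (p + if i ∈ B then (0 : ℝ) else 1 - p) = if i ∈ B then p else 1 := by
    intro i _
    split_ifs <;> ring
  rw [prod_congr rfl hfactor, prod_ite_mem, inter_eq_right.mpr hB, prod_const]

theorem binomialExp_card_filter_subset [DecidableEq α] {ι : Type*} (Q : Finset ι)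
    (B : ι → Finset α) (hB : ∀ q ∈ Q, B q ⊆ s) :
    binomialExp s p (fun A => (#(Q.filter fun q => B q ⊆ A) : ℝ)) = ∑ q ∈ Q, p ^ #(B q) := by
  simp only [card_filter, Nat.cast_sum, Nat.cast_ite, Nat.cast_one, Nat.cast_zero]
  rw [binomialExp_sum]
  exact sum_congr rfl fun q hq => binomialExp_indicator_subset (hB q hq)

theorem binomialExp_card [DecidableEq α] : binomialExp s p (fun A => (#A : ℝ)) = #s * p := by
  have h : ∀ A ⊆ s, (#A : ℝ) = #(s.filter fun i => {i} ⊆ A) := fun A hA => by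
    simp [filter_mem_eq_inter, inter_eq_right.mpr hA]
  rw [binomialExp_congr h, binomialExp_card_filter_subset _ _ (fun i hi => by simpa using hi)]
  simp

theorem binomialExp_card_offDiag [DecidableEq α] :
    binomialExp s p (fun A => (#A.offDiag : ℝ)) = #s.offDiag * p ^ 2 := by
  have h : ∀ A ⊆ s, (#A.offDiag : ℝ) = #(s.offDiag.filter fun q => {q.1, q.2} ⊆ A) :=
    fun A hA => by
      congr 2
      ext q
      simp only [mem_offDiag, mem_filter, insert_subset_iff, singleton_subset_iff]
      exact ⟨fun h => ⟨⟨hA h.1, hA h.2.1, h.2.2⟩, h.1, h.2.1⟩, fun h => ⟨h.2.1, h.2.2, h.1.2.2⟩⟩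
  rw [binomialExp_congr h, binomialExp_card_filter_subset]
  · rw [← nsmul_eq_mul, ← sum_const]
    exact sum_congr rfl fun q hq => by rw [card_pair (mem_offDiag.mp hq).2.2]
  · intro q hq
    obtain ⟨h₁, h₂, -⟩ := mem_offDiag.mp hq
    simp [insert_subset_iff, h₁, h₂]

theorem binomialExp_sq_card_sub [DecidableEq α] (c : ℝ) :
    binomialExp s p (fun A => ((#A : ℝ) - c) ^ 2) = #s * p * (1 - p) + (#s * p - c) ^ 2 := by
  have h : ∀ A ⊆ s, ((#A : ℝ) - c) ^ 2 = #A.offDiag + ((1 - 2 * c) * #A + c ^ 2) := by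
    intro A _
    rw [offDiag_card, Nat.cast_sub (Nat.le_mul_self _), Nat.cast_mul]
    ring
  rw [binomialExp_congr h, binomialExp_add, binomialExp_add, binomialExp_const_mul,
    binomialExp_card_offDiag, binomialExp_card, binomialExp_const, offDiag_card,
    Nat.cast_sub (Nat.le_mul_self _), Nat.cast_mul]
  ring

end BinomialExpectation

theorem binomialExp_card_nontrivialAddQuadruples_le {M : Type*} [DecidableEq M]
    [AddCancelCommMonoid M] [IsAddTorsionFree M] {s : Finset M} {p : ℝ} (hp : p ∈ Set.Icc 0 1) :
    binomialExp s p (fun A => (#(nontrivialAddQuadruples A) : ℝ))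
      ≤ 2 * #s ^ 2 * p ^ 3 + #s ^ 3 * p ^ 4 := by
  set Q := nontrivialAddQuadruples s
  have hsupp : ∀ q ∈ Q, ({q.1.1, q.1.2, q.2.1, q.2.2} : Finset M) ⊆ s := by
    rintro ⟨⟨a, b⟩, c, d⟩ hq
    obtain ⟨⟨ha, hb, hc, hd⟩, -⟩ := mem_nontrivialAddQuadruples.mp hq
    simp [insert_subset_iff, ha, hb, hc, hd]
  rw [binomialExp_congr fun A hA => by rw [nontrivialAddQuadruples_eq_filter hA],
    binomialExp_card_filter_subset Q _ hsupp,
    ← sum_filter_add_sum_filter_not Q fun q => q.1.1 = q.1.2 ∨ q.2.1 = q.2.2]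
  have hdeg : ∀ q ∈ Q.filter (fun q => q.1.1 = q.1.2 ∨ q.2.1 = q.2.2),
      p ^ #({q.1.1, q.1.2, q.2.1, q.2.2} : Finset M) ≤ p ^ 3 := by
    rintro ⟨⟨a, b⟩, c, d⟩ hq
    exact pow_le_pow_of_le_one hp.1 hp.2
      (three_le_card_of_mem_nontrivialAddQuadruples (mem_filter.mp hq).1)
  have hgen : ∀ q ∈ Q.filter (fun q => ¬(q.1.1 = q.1.2 ∨ q.2.1 = q.2.2)),
      p ^ #({q.1.1, q.1.2, q.2.1, q.2.2} : Finset M) ≤ p ^ 4 := by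
    rintro ⟨⟨a, b⟩, c, d⟩ hq
    obtain ⟨hq, hne⟩ := mem_filter.mp hq
    exact pow_le_pow_of_le_one hp.1 hp.2
      (four_le_card_of_mem_nontrivialAddQuadruples hq (not_or.mp hne).1 (not_or.mp hne).2)
  refine add_le_add ((sum_le_card_nsmul _ _ _ hdeg).trans ?_)
    ((sum_le_card_nsmul _ _ _ hgen).trans ?_) <;> rw [nsmul_eq_mul]
  · have h : (#(Q.filter fun q => q.1.1 = q.1.2 ∨ q.2.1 = q.2.2) : ℝ) ≤ 2 * #s ^ 2 := by
      exact_mod_cast card_filter_nontrivialAddQuadruples_le s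
    exact mul_le_mul_of_nonneg_right h (pow_nonneg hp.1 3)
  · have h : (#(Q.filter fun q => ¬(q.1.1 = q.1.2 ∨ q.2.1 = q.2.2)) : ℝ) ≤ #s ^ 3 := by
      exact_mod_cast (card_filter_le _ _).trans (card_nontrivialAddQuadruples_le s)
    exact mul_le_mul_of_nonneg_right h (pow_nonneg hp.1 4)

section BinomialProb

variable {N : ℕ} {p : ℝ}

theorem binomialProb_nonneg (hp : p ∈ Set.Icc 0 1) (E : Finset ℕ → Prop) :
    0 ≤ binomialProb N p E :=
  sum_nonneg fun _ _ => by
    split_ifs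
    exacts [mul_nonneg (pow_nonneg hp.1 _) (pow_nonneg (sub_nonneg.mpr hp.2) _), le_rfl]

open Classical in
theorem binomialProb_eq_binomialExp (E : Finset ℕ → Prop) :
    binomialProb N p E = binomialExp (range (N + 1)) p (fun A => if E A then 1 else 0) := by
  simp only [binomialProb, binomialExp, card_range, mul_ite, mul_one, mul_zero]

theorem binomialProb_mono (hp : p ∈ Set.Icc 0 1) {E F : Finset ℕ → Prop} (h : ∀ A, E A → F A) :
    binomialProb N p E ≤ binomialProb N p F := by
  classical
  simp only [binomialProb_eq_binomialExp]
  refine binomialExp_mono hp fun A _ => ?_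
  by_cases hE : E A
  · simp [hE, h A hE]
  · simp only [hE, if_false]
    split_ifs <;> norm_num

theorem binomialProb_or_le (hp : p ∈ Set.Icc 0 1) (E F : Finset ℕ → Prop) :
    binomialProb N p (fun A => E A ∨ F A) ≤ binomialProb N p E + binomialProb N p F := by
  classical
  simp only [binomialProb_eq_binomialExp, ← binomialExp_add]
  refine binomialExp_mono hp fun A _ => ?_
  by_cases hE : E A <;> by_cases hF : F A <;> simp [hE, hF]

theorem binomialProb_le_binomialExp_div (hp : p ∈ Set.Icc 0 1) {X : Finset ℕ → ℝ}
    (hX : ∀ A, 0 ≤ X A) {t : ℝ} (ht : 0 < t) :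
    binomialProb N p (fun A => t ≤ X A) ≤ binomialExp (range (N + 1)) p X / t := by
  classical
  rw [binomialProb_eq_binomialExp, le_div_iff₀ ht, mul_comm, ← binomialExp_const_mul]
  refine binomialExp_mono hp fun A _ => ?_
  split_ifs with h
  · simpa [mul_comm] using h
  · simpa using hX A

theorem binomialProb_le_abs_card_sub_le (hp : p ∈ Set.Icc 0 1) (c : ℝ) {t : ℝ} (ht : 0 < t) :
    binomialProb N p (fun A => t ≤ |(#A : ℝ) - c|)
      ≤ ((N + 1) * p * (1 - p) + ((N + 1) * p - c) ^ 2) / t ^ 2 := by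
  have h := binomialProb_le_binomialExp_div (N := N) hp (fun A => sq_nonneg ((#A : ℝ) - c))
    (pow_pos ht 2)
  rw [binomialExp_sq_card_sub, card_range, Nat.cast_succ] at h
  refine le_trans (binomialProb_mono hp fun A hA => ?_) h
  exact (pow_le_pow_left₀ ht.le hA 2).trans_eq (sq_abs _)

end BinomialProb

def AsymptoticallyAlmostSurely (p : ℕ → ℝ) (E : ℕ → Finset ℕ → Prop) : Prop :=
  Tendsto (fun N => binomialProb N (p N) fun A => ¬ E N A) atTop (𝓝 0)

namespace AsymptoticallyAlmostSurely

variable {p : ℕ → ℝ} {E F : ℕ → Finset ℕ → Prop}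

theorem of_eventually_le (hp : ∀ N, p N ∈ Set.Icc 0 1) {g : ℕ → ℝ}
    (hg : Tendsto g atTop (𝓝 0))
    (h : ∀ᶠ N in atTop, binomialProb N (p N) (fun A => ¬ E N A) ≤ g N) :
    AsymptoticallyAlmostSurely p E :=
  squeeze_zero' (Eventually.of_forall fun N => binomialProb_nonneg (hp N) _) h hg

theorem mono (hp : ∀ N, p N ∈ Set.Icc 0 1) (hE : AsymptoticallyAlmostSurely p E)
    (h : ∀ᶠ N in atTop, ∀ A, E N A → F N A) : AsymptoticallyAlmostSurely p F :=
  of_eventually_le hp hE <| h.mono fun N hN =>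
    binomialProb_mono (hp N) fun A hF hE => hF (hN A hE)

theorem and (hp : ∀ N, p N ∈ Set.Icc 0 1) (hE : AsymptoticallyAlmostSurely p E)
    (hF : AsymptoticallyAlmostSurely p F) :
    AsymptoticallyAlmostSurely p fun N A => E N A ∧ F N A :=
  of_eventually_le hp (by simpa using hE.add hF) <| Eventually.of_forall fun N =>
    (binomialProb_mono (hp N) fun A h => not_and_or.mp h).trans (binomialProb_or_le (hp N) _ _)

end AsymptoticallyAlmostSurely

theorem binomialTilde_of_forall_aas {p : ℕ → ℝ} (hp : ∀ N, p N ∈ Set.Icc 0 1)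
    {Y : ℕ → Finset ℕ → ℝ} {f : ℕ → ℝ} (hf : ∀ N, 0 ≤ f N)
    (h : ∀ ε, 0 < ε → ε ≤ 1 →
      AsymptoticallyAlmostSurely p fun N A => |Y N A - f N| ≤ ε * f N) :
    BinomialTilde p Y f := by
  intro ε₁ ε₂ hε₁ hε₂
  have hAAS : AsymptoticallyAlmostSurely p
      fun N A => (1 - ε₁) * f N ≤ Y N A ∧ Y N A ≤ (1 + ε₁) * f N := by
    refine (h (min ε₁ 1) (lt_min hε₁ one_pos) (min_le_right _ _)).mono hp
      (Eventually.of_forall fun N A hA => ?_)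
    have := mul_le_mul_of_nonneg_right (min_le_left ε₁ 1) (hf N)
    constructor <;> linarith [abs_le.mp hA]
  obtain ⟨N₀, hN₀⟩ := eventually_atTop.mp (hAAS.eventually (gt_mem_nhds hε₂))
  exact ⟨N₀, fun N hN => hN₀ N hN.le⟩

theorem aas_abs_card_sub_le {p : ℕ → ℝ} (hp : ∀ N, p N ∈ Set.Icc 0 1)
    (hr : Tendsto (fun N : ℕ => (N : ℝ) * p N) atTop atTop) {δ : ℝ} (hδ : 0 < δ) :
    AsymptoticallyAlmostSurely p fun N A => |(#A : ℝ) - N * p N| ≤ δ * (N * p N) := by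
  refine .of_eventually_le hp (g := fun N => 2 / (δ ^ 2 * (N * p N)))
    (tendsto_const_nhds.div_atTop (hr.const_mul_atTop (by positivity))) ?_
  filter_upwards [hr.eventually_gt_atTop 0, eventually_ge_atTop 1] with N hr₀ hN
  have hpN := (hp N).1
  have hN' : (1 : ℝ) ≤ N := by exact_mod_cast hN
  refine (binomialProb_mono (hp N) fun A h => (not_le.mp h).le).trans <|
    (binomialProb_le_abs_card_sub_le (hp N) _ (by positivity)).trans ?_
  rw [div_le_div_iff₀ (by positivity) (by positivity)]
  have hnum : ((N : ℝ) + 1) * p N * (1 - p N) + ((N + 1) * p N - N * p N) ^ 2 ≤ 2 * (N * p N) := by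
    nlinarith
  calc _ ≤ 2 * (N * p N) * (δ ^ 2 * (N * p N)) := by gcongr
    _ = _ := by ring

theorem aas_card_nontrivialAddQuadruples_le {p : ℕ → ℝ} (hp : ∀ N, p N ∈ Set.Ioo 0 1)
    (hp₀ : Tendsto p atTop (𝓝 0)) (hpr : Tendsto (fun N : ℕ => (N : ℝ) * p N ^ 2) atTop (𝓝 0))
    {δ : ℝ} (hδ : 0 < δ) :
    AsymptoticallyAlmostSurely p
      fun N A => (#(nontrivialAddQuadruples A) : ℝ) ≤ δ * (N * p N) ^ 2 := by
  have hpI : ∀ N, p N ∈ Set.Icc 0 1 := fun N => Set.Ioo_subset_Icc_self (hp N)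
  refine .of_eventually_le hpI (g := fun N => 8 / δ * (p N + N * p N ^ 2))
    (by simpa using (hp₀.add hpr).const_mul (8 / δ)) ?_
  filter_upwards [eventually_ge_atTop 1] with N hN
  have hpN := (hp N).1
  have hN' : (1 : ℝ) ≤ N := by exact_mod_cast hN
  refine (binomialProb_mono (hpI N) fun A h => (not_le.mp h).le).trans <|
    (binomialProb_le_binomialExp_div (hpI N) (fun A => Nat.cast_nonneg _) (by positivity)).trans ?_
  rw [div_le_iff₀ (by positivity)]
  refine (binomialExp_card_nontrivialAddQuadruples_le (hpI N)).trans ?_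
  rw [card_range, Nat.cast_succ]
  have h₂ : ((N : ℝ) + 1) ^ 2 ≤ 4 * N ^ 2 := by nlinarith
  have h₃ : ((N : ℝ) + 1) ^ 3 ≤ 8 * N ^ 3 := by nlinarith
  calc 2 * ((N : ℝ) + 1) ^ 2 * p N ^ 3 + ((N : ℝ) + 1) ^ 3 * p N ^ 4
      ≤ 2 * (4 * N ^ 2) * p N ^ 3 + 8 * N ^ 3 * p N ^ 4 := by gcongr
    _ = 8 / δ * (p N + N * p N ^ 2) * (δ * (N * p N) ^ 2) := by field_simp; ring

theorem abs_sq_sub_sq_le {m r δ : ℝ} (hδ₀ : 0 ≤ δ) (hδ₁ : δ ≤ 1) (hr : 0 ≤ r)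
    (h : |m - r| ≤ δ * r) : |m ^ 2 - r ^ 2| ≤ 3 * δ * r ^ 2 := by
  have hsum : |m + r| ≤ 3 * r := by
    calc |m + r| = |(m - r) + 2 * r| := by ring_nf
      _ ≤ |m - r| + |2 * r| := abs_add_le _ _
      _ ≤ δ * r + 2 * r := by rw [abs_of_nonneg (by linarith : (0 : ℝ) ≤ 2 * r)]; linarith
      _ ≤ 3 * r := by nlinarith
  calc |m ^ 2 - r ^ 2| = |m - r| * |m + r| := by rw [← abs_mul]; ring_nf
    _ ≤ δ * r * (3 * r) := mul_le_mul h hsum (abs_nonneg _) (by positivity)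
    _ = 3 * δ * r ^ 2 := by ring

section Sandwich

variable {M : Type*} [DecidableEq M] {A : Finset M} {r δ : ℝ}

theorem abs_card_add_sub_le [AddCommMonoid M] (hδ₀ : 0 ≤ δ) (hδ₁ : δ ≤ 1) (hr : 1 ≤ δ * r)
    (hA : |(#A : ℝ) - r| ≤ δ * r) (hT : (#(nontrivialAddQuadruples A) : ℝ) ≤ δ * r ^ 2) :
    |(#(A + A) : ℝ) - r ^ 2 / 2| ≤ 5 * δ * (r ^ 2 / 2) := by
  have hr₀ : 0 ≤ r := by nlinarith
  have hsym2 : (#A.sym2 : ℝ) = (#A + 1) * #A / 2 := by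
    rw [card_sym2, Nat.cast_choose_two]
    push_cast
    ring
  have hupper : (#(A + A) : ℝ) ≤ #A.sym2 := by exact_mod_cast card_add_le_card_sym2 A
  have hlower : (#A.sym2 : ℝ) ≤ #(A + A) + #(nontrivialAddQuadruples A) := by
    exact_mod_cast card_sym2_le_card_add_add A
  have hsq := abs_le.mp (abs_sq_sub_sq_le hδ₀ hδ₁ hr₀ hA)
  have hm : (#A : ℝ) ≤ 2 * δ * r ^ 2 := by nlinarith [abs_le.mp hA]
  rw [abs_le]
  constructor <;> nlinarith [Nat.cast_nonneg (α := ℝ) #A]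

theorem abs_card_sub_image_sub_le {G : Type*} [AddCommMonoid M] [AddCommGroup G] [DecidableEq G]
    (f : M →+ G) (hf : Function.Injective f) (hδ₀ : 0 ≤ δ) (hδ₁ : δ ≤ 1) (hr : 1 ≤ δ * r)
    (hA : |(#A : ℝ) - r| ≤ δ * r) (hT : (#(nontrivialAddQuadruples A) : ℝ) ≤ δ * r ^ 2) :
    |(#(A.image f - A.image f) : ℝ) - r ^ 2| ≤ 6 * δ * r ^ 2 := by
  have hr₀ : 0 ≤ r := by nlinarith
  have hoff : (#A.offDiag : ℝ) = #A ^ 2 - #A := by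
    rw [offDiag_card, Nat.cast_sub (Nat.le_mul_self _), Nat.cast_mul, sq]
  have hupper : (#(A.image f - A.image f) : ℝ) ≤ #A.offDiag + 1 := by
    exact_mod_cast card_sub_image_le_card_offDiag_add_one f A
  have hlower : (#A.offDiag : ℝ) ≤ #(A.image f - A.image f) + #(nontrivialAddQuadruples A) := by
    exact_mod_cast card_offDiag_le_card_sub_image_add f hf A
  have hsq := abs_le.mp (abs_sq_sub_sq_le hδ₀ hδ₁ hr₀ hA)
  have hm : (#A : ℝ) ≤ 2 * δ * r ^ 2 := by nlinarith [abs_le.mp hA]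
  have hone : 1 ≤ δ * r ^ 2 := by nlinarith
  rw [abs_le]
  constructor <;> nlinarith [Nat.cast_nonneg (α := ℝ) #A]

end Sandwich

theorem tendsto_natCast_mul_atTop_of_isLittleO {p : ℕ → ℝ} (hp : ∀ N, 0 < p N)
    (h : (fun N : ℕ => (N : ℝ)⁻¹) =o[atTop] p) :
    Tendsto (fun N : ℕ => (N : ℝ) * p N) atTop atTop := by
  have hpos : ∀ᶠ N : ℕ in atTop, (N : ℝ)⁻¹ / p N ∈ Set.Ioi 0 := by
    filter_upwards [eventually_ge_atTop 1] with N hN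
    exact div_pos (inv_pos.mpr (by exact_mod_cast hN)) (hp N)
  convert (tendsto_nhdsWithin_iff.mpr ⟨h.tendsto_div_nhds_zero, hpos⟩).inv_tendsto_nhdsGT_zero
    using 2 with N
  simp [mul_comm]

theorem tendsto_natCast_mul_sq_of_isLittleO {p : ℕ → ℝ}
    (h : p =o[atTop] fun N : ℕ => (N : ℝ) ^ (-(1 / 2 : ℝ))) :
    Tendsto (fun N : ℕ => (N : ℝ) * p N ^ 2) atTop (𝓝 0) := by
  have h₂ := (isBigO_refl (fun N : ℕ => (N : ℝ)) atTop).mul_isLittleO (h.pow two_pos)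
  refine (isLittleO_one_iff ℝ).mp (h₂.congr' EventuallyEq.rfl ?_)
  filter_upwards [eventually_ge_atTop 1] with N hN
  have hN' : (0 : ℝ) < N := by exact_mod_cast hN
  rw [← Real.rpow_natCast, ← Real.rpow_mul hN'.le]
  norm_num [Real.rpow_neg_one, hN'.ne']

theorem fast_decay_two_summands (p : ℕ → ℝ) (hp : ∀ N, p N ∈ Set.Ioo (0 : ℝ) 1)
    (hp1 : (fun N : ℕ => (N : ℝ)⁻¹) =o[atTop] fun N => p N)
    (hp2 : (fun N : ℕ => p N) =o[atTop] fun N : ℕ => (N : ℝ) ^ (-(1/2 : ℝ))) :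
    BinomialTilde p (fun _ A => ((A + A).card : ℝ))
        (fun N => ((N : ℝ) * p N) ^ 2 / 2) ∧
      BinomialTilde p
        (fun _ A => (((A.image fun m : ℕ => (m : ℤ)) - (A.image fun m : ℕ => (m : ℤ))).card : ℝ))
        (fun N => ((N : ℝ) * p N) ^ 2) := by
  have hpI : ∀ N, p N ∈ Set.Icc (0 : ℝ) 1 := fun N => Set.Ioo_subset_Icc_self (hp N)
  have hr := tendsto_natCast_mul_atTop_of_isLittleO (fun N => (hp N).1) hp1
  have hp₀ : Tendsto p atTop (𝓝 0) :=
    hp2.trans_tendsto ((tendsto_rpow_neg_atTop (by norm_num)).comp tendsto_natCast_atTop_atTop)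
  have hpr := tendsto_natCast_mul_sq_of_isLittleO hp2
  have htypical : ∀ δ, 0 < δ → AsymptoticallyAlmostSurely p fun N A =>
      1 ≤ δ * (N * p N) ∧ |(#A : ℝ) - N * p N| ≤ δ * (N * p N) ∧
        (#(nontrivialAddQuadruples A) : ℝ) ≤ δ * (N * p N) ^ 2 := fun δ hδ =>
    ((aas_abs_card_sub_le hpI hr hδ).and hpI
      (aas_card_nontrivialAddQuadruples_le hp hp₀ hpr hδ)).mono hpI <| by
        filter_upwards [hr.eventually_ge_atTop δ⁻¹] with N hN A hA
        exact ⟨(inv_le_iff_one_le_mul₀' hδ).mp hN, hA⟩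
  refine ⟨binomialTilde_of_forall_aas hpI (fun N => by positivity) fun ε hε hε₁ => ?_,
    binomialTilde_of_forall_aas hpI (fun N => by positivity) fun ε hε hε₁ => ?_⟩
  · refine (htypical (ε / 5) (by positivity)).mono hpI (.of_forall fun N A ⟨hδr, hA, hT⟩ => ?_)
    have := abs_card_add_sub_le (by positivity) (by linarith) hδr hA hT
    rwa [mul_div_cancel₀ _ (by norm_num : (5 : ℝ) ≠ 0)] at this
  · refine (htypical (ε / 6) (by positivity)).mono hpI (.of_forall fun N A ⟨hδr, hA, hT⟩ => ?_)
    have := abs_card_sub_image_sub_le (Nat.castAddMonoidHom ℤ) Nat.cast_injective (by positivity)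
      (by linarith) hδr hA hT
    rwa [mul_div_cancel₀ _ (by norm_num : (6 : ℝ) ≠ 0)] at this
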